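/- arXiv:1508.03491 — 3 statements merged into one kernel-verified Lean document; each statement's English description precedes it below -/
import Mathlib

section
/- Let V be a finite-dimensional real inner product space, S ⊆ V a set of states, and E₊ ⊆ V a pointed convex cone of effects with ⟨e,s⟩ ≥ 0 for all e ∈ E₊, s ∈ S. Call a nonzero effect e ∈ E₊ ray-extreme if it generates an extreme ray of E₊ (i.e., whenever e = a + b with a, b ∈ E₊, both a and b are nonnegative multiples of e). Suppose e, f, g are ray-extreme effects with f ≠ g, f and g not positive multiples of each other, and suppose for every ray-extreme effect h there exists s ∈ S with ⟨h,s⟩ > 0. If e ∈ span{f, g}, then e is a nonnegative multiple of f or a nonnegative multiple of g. -/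
open scoped RealInnerProductSpace

/-- `e` generates an extreme ray of the pointed convex cone `E`. -/
def IsRayExtreme {V : Type*} [AddCommGroup V] [Module ℝ V] (E : Set V) (e : V) : Prop :=
  e ∈ E ∧ e ≠ 0 ∧
    ∀ a ∈ E, ∀ b ∈ E, e = a + b →
      (∃ c : ℝ, 0 ≤ c ∧ a = c • e) ∧ (∃ c : ℝ, 0 ≤ c ∧ b = c • e)

/-! Write `e = α • f + β • g`. If `α, β ≤ 0` then `-e` lies in the cone, which pointedness forbids.
If the signs are mixed, say `α ≤ 0 < β`, then `β • g = e + (-α) • f` is a decomposition of a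
multiple of `g` inside the cone, so extremality of `g` makes `e` a multiple of `g`. If `α, β > 0`,
extremality of `e` makes both `f` and `g` positive multiples of `e`, hence of each other. -/

namespace IsRayExtreme

variable {V : Type*} [AddCommGroup V] [Module ℝ V] {E : Set V} {e f g a b : V}

theorem neg_notMem (hpointed : ∀ e ∈ E, -e ∈ E → e = 0) (he : IsRayExtreme E e) : -e ∉ E :=
  fun hneg => he.2.1 (hpointed e he.1 hneg)

theorem exists_pos_smul_of_eq_add (he : IsRayExtreme E e) (ha : a ∈ E) (ha0 : a ≠ 0)
    (hb : b ∈ E) (h : e = a + b) : ∃ c : ℝ, 0 < c ∧ a = c • e := by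
  obtain ⟨⟨c, hc, rfl⟩, -⟩ := he.2.2 a ha b hb h
  refine ⟨c, hc.lt_of_ne ?_, rfl⟩
  rintro rfl
  exact ha0 (zero_smul ℝ e)

theorem exists_nonneg_smul_of_smul_eq_add (hsmul : ∀ e ∈ E, ∀ c : ℝ, 0 ≤ c → c • e ∈ E)
    (hg : IsRayExtreme E g) (ha : a ∈ E) (hb : b ∈ E) {t : ℝ} (ht : 0 < t)
    (h : t • g = a + b) : ∃ c : ℝ, 0 ≤ c ∧ a = c • g := by
  have hdecomp : g = t⁻¹ • a + t⁻¹ • b := by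
    rw [← smul_add, ← h, inv_smul_smul₀ ht.ne']
  obtain ⟨⟨c, hc, hac⟩, -⟩ :=
    hg.2.2 _ (hsmul a ha _ (inv_nonneg.2 ht.le)) _ (hsmul b hb _ (inv_nonneg.2 ht.le)) hdecomp
  refine ⟨t * c, by positivity, ?_⟩
  rw [← smul_smul, ← hac, smul_inv_smul₀ ht.ne']

theorem exists_nonneg_smul_of_smul_add_smul_eq (hsmul : ∀ e ∈ E, ∀ c : ℝ, 0 ≤ c → c • e ∈ E)
    (hg : IsRayExtreme E g) (he : e ∈ E) (hf : f ∈ E) {α β : ℝ} (hα : α ≤ 0) (hβ : 0 < β)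
    (h : α • f + β • g = e) : ∃ c : ℝ, 0 ≤ c ∧ e = c • g :=
  hg.exists_nonneg_smul_of_smul_eq_add hsmul he (hsmul f hf (-α) (neg_nonneg.2 hα)) hβ
    (by rw [← h, neg_smul]; abel)

theorem exists_pos_smul_of_eq_pos_smul_add_pos_smul
    (hsmul : ∀ e ∈ E, ∀ c : ℝ, 0 ≤ c → c • e ∈ E) (he : IsRayExtreme E e)
    (hf : IsRayExtreme E f) (hg : IsRayExtreme E g) {α β : ℝ} (hα : 0 < α) (hβ : 0 < β)
    (h : e = α • f + β • g) :
    ∃ c : ℝ, 0 < c ∧ f = c • g := by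
  obtain ⟨c, hc, hfe⟩ := he.exists_pos_smul_of_eq_add (hsmul f hf.1 α hα.le)
    (smul_ne_zero hα.ne' hf.2.1) (hsmul g hg.1 β hβ.le) h
  obtain ⟨d, hd, hge⟩ := he.exists_pos_smul_of_eq_add (hsmul g hg.1 β hβ.le)
    (smul_ne_zero hβ.ne' hg.2.1) (hsmul f hf.1 α hα.le) (h.trans (add_comm _ _))
  refine ⟨α⁻¹ * c * (d⁻¹ * β), by positivity, ?_⟩
  have hfe' : f = (α⁻¹ * c) • e := by rw [mul_smul, ← hfe, inv_smul_smul₀ hα.ne']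
  have heg : e = (d⁻¹ * β) • g := by rw [mul_smul, hge, inv_smul_smul₀ hd.ne']
  rw [hfe', heg, smul_smul]

end IsRayExtreme

theorem stmt_1_general {V : Type*} [NormedAddCommGroup V] [InnerProductSpace ℝ V]
    (E : Set V)
    (hsmul : ∀ e ∈ E, ∀ c : ℝ, 0 ≤ c → c • e ∈ E)
    (hadd : ∀ a ∈ E, ∀ b ∈ E, a + b ∈ E)
    (hpointed : ∀ e ∈ E, -e ∈ E → e = 0)
    (e f g : V)
    (he : IsRayExtreme E e) (hf : IsRayExtreme E f) (hg : IsRayExtreme E g)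
    (hnotmul : ¬ ∃ c : ℝ, 0 < c ∧ f = c • g)
    (hspan : e ∈ Submodule.span ℝ ({f, g} : Set V)) :
    (∃ c : ℝ, 0 ≤ c ∧ e = c • f) ∨ (∃ c : ℝ, 0 ≤ c ∧ e = c • g) := by
  obtain ⟨α, β, hαβ⟩ := Submodule.mem_span_pair.mp hspan
  rcases le_or_gt α 0 with hα | hα <;> rcases le_or_gt β 0 with hβ | hβ
  · refine absurd ?_ (he.neg_notMem hpointed)
    rw [← hαβ, neg_add, ← neg_smul, ← neg_smul]
    exact hadd _ (hsmul f hf.1 _ (neg_nonneg.2 hα)) _ (hsmul g hg.1 _ (neg_nonneg.2 hβ))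
  · exact .inr (hg.exists_nonneg_smul_of_smul_add_smul_eq hsmul he.1 hf.1 hα hβ hαβ)
  · exact .inl (hf.exists_nonneg_smul_of_smul_add_smul_eq hsmul he.1 hg.1 hβ hα
      ((add_comm _ _).trans hαβ))
  · exact absurd (he.exists_pos_smul_of_eq_pos_smul_add_pos_smul hsmul hf hg hα hβ hαβ.symm)
      hnotmul

theorem stmt_1 {V : Type*} [NormedAddCommGroup V] [InnerProductSpace ℝ V]
    [FiniteDimensional ℝ V]
    (S : Set V) (E : Set V)
    (hsmul : ∀ e ∈ E, ∀ c : ℝ, 0 ≤ c → c • e ∈ E)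
    (hadd : ∀ a ∈ E, ∀ b ∈ E, a + b ∈ E)
    (hconvex : Convex ℝ E)
    (hpointed : ∀ e ∈ E, -e ∈ E → e = 0)
    (hpos : ∀ e ∈ E, ∀ s ∈ S, 0 ≤ ⟪e, s⟫)
    (e f g : V)
    (he : IsRayExtreme E e) (hf : IsRayExtreme E f) (hg : IsRayExtreme E g)
    (hfg : f ≠ g)
    (hnotmul : ¬ ∃ c : ℝ, 0 < c ∧ f = c • g)
    (hsep : ∀ h : V, IsRayExtreme E h → ∃ s ∈ S, 0 < ⟪h, s⟫)
    (hspan : e ∈ Submodule.span ℝ ({f, g} : Set V)) :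
    (∃ c : ℝ, 0 ≤ c ∧ e = c • f) ∨ (∃ c : ℝ, 0 ≤ c ∧ e = c • g) :=
  stmt_1_general E hsmul hadd hpointed e f g he hf hg hnotmul hspan
end

section
/- Let K ⊆ V be a closed, pointed, generating convex cone in a finite-dimensional real inner product space, and suppose K is reducible, i.e., V = V₁ ⊕ V₂ (orthogonal direct sum is not required, just a direct sum decomposition) such that every extreme ray of K lies in V₁ or in V₂. Then the dual cone K* = {v ∈ V : ⟨v, k⟩ ≥ 0 for all k ∈ K} is also reducible with respect to a direct sum decomposition of V. -/
open scoped RealInnerProductSpace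

/-- `x` generates an extreme ray of the cone `K`. -/
def IsExtremeRayVec {V : Type*} [AddCommGroup V] [Module ℝ V] (K : Set V) (x : V) : Prop :=
  x ∈ K ∧ x ≠ 0 ∧
    ∀ a ∈ K, ∀ b ∈ K, x = a + b →
      (∃ c : ℝ, 0 ≤ c ∧ a = c • x) ∧ (∃ c : ℝ, 0 ≤ c ∧ b = c • x)

/-- A cone is reducible if the space splits as a direct sum such that every
extreme ray of the cone lies in one of the two (nontrivial) summands. -/
def IsReducibleCone {V : Type*} [AddCommGroup V] [Module ℝ V] (K : Set V) : Prop :=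
  ∃ V₁ V₂ : Submodule ℝ V, IsCompl V₁ V₂ ∧ V₁ ≠ ⊥ ∧ V₂ ≠ ⊥ ∧
    ∀ x : V, IsExtremeRayVec K x → x ∈ V₁ ∨ x ∈ V₂

open Metric in
/-- There is a continuous linear functional nonnegative on a closed pointed cone
and strictly positive on its unit sphere part. -/
lemma exists_pos_functional {V : Type*} [NormedAddCommGroup V] [InnerProductSpace ℝ V]
    [FiniteDimensional ℝ V] (K : Set V)
    (hclosed : IsClosed K)
    (hsmul : ∀ x ∈ K, ∀ c : ℝ, 0 ≤ c → c • x ∈ K)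
    (hadd : ∀ a ∈ K, ∀ b ∈ K, a + b ∈ K)
    (hpointed : ∀ x ∈ K, -x ∈ K → x = 0) :
    ∃ f : V →L[ℝ] ℝ, (∀ k ∈ K, 0 ≤ f k) ∧ ∀ s ∈ K ∩ sphere (0:V) 1, 0 < f s := by
  have hKconv : Convex ℝ K := fun a ha b hb p q hp hq _ =>
    hadd _ (hsmul a ha p hp) _ (hsmul b hb q hq)
  set S : Set V := K ∩ sphere (0:V) 1 with hS
  have hSK : S ⊆ K := Set.inter_subset_left
  have hScpt : IsCompact S := (isCompact_sphere (0:V) 1).of_isClosed_subset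
    (hclosed.inter isClosed_sphere) Set.inter_subset_right
  -- for every s ∈ S there is a functional nonneg on K and positive at s
  have key : ∀ s ∈ S, ∃ g : V →L[ℝ] ℝ, (∀ k ∈ K, 0 ≤ g k) ∧ 0 < g s := by
    rintro s ⟨hsK, hs1⟩
    have hs0 : s ≠ 0 := by
      intro h; rw [h] at hs1; simp at hs1
    have hns : -s ∉ K := fun h => hs0 (hpointed s hsK h)
    obtain ⟨f, u, hfK, hu⟩ := geometric_hahn_banach_closed_point hKconv hclosed hns
    have h0K : (0:V) ∈ K := by simpa using hsmul s hsK 0 le_rfl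
    have hu0 : 0 < u := by simpa using hfK 0 h0K
    have hfle : ∀ k ∈ K, f k ≤ 0 := by
      intro k hk
      by_contra h
      push_neg at h
      have hc : (u / f k) • k ∈ K := hsmul k hk _ (le_of_lt (div_pos hu0 h))
      have := hfK _ hc
      rw [map_smul, smul_eq_mul, div_mul_cancel₀ _ (ne_of_gt h)] at this
      exact lt_irrefl u this
    refine ⟨-f, fun k hk => ?_, ?_⟩
    · simpa using hfle k hk
    · have : f (-s) > u := hu
      rw [map_neg] at this
      simp only [ContinuousLinearMap.neg_apply]
      linarith
  choose g hg0 hgpos using key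
  have hcover : S ⊆ ⋃ s : S, {x | 0 < g s s.2 x} := fun x hx =>
    Set.mem_iUnion.2 ⟨⟨x, hx⟩, hgpos x hx⟩
  obtain ⟨t, ht⟩ := hScpt.elim_finite_subcover (fun s : S => {x | 0 < g s s.2 x})
    (fun s => isOpen_lt continuous_const (g s s.2).continuous) hcover
  refine ⟨∑ s ∈ t, g s s.2, fun k hk => ?_, fun x hx => ?_⟩
  · rw [ContinuousLinearMap.sum_apply]
    exact Finset.sum_nonneg fun s _ => hg0 s s.2 k hk
  · obtain ⟨s, hst, hxs⟩ := Set.mem_iUnion₂.1 (ht hx)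
    rw [ContinuousLinearMap.sum_apply]
    exact Finset.sum_pos' (fun i _ => hg0 i i.2 x (hSK hx)) ⟨s, hst, hxs⟩
open scoped RealInnerProductSpace

open Metric in
lemma inner_nonneg_of_extreme {V : Type*} [NormedAddCommGroup V] [InnerProductSpace ℝ V]
    [FiniteDimensional ℝ V] (K : Set V)
    (hclosed : IsClosed K)
    (hsmul : ∀ x ∈ K, ∀ c : ℝ, 0 ≤ c → c • x ∈ K)
    (hadd : ∀ a ∈ K, ∀ b ∈ K, a + b ∈ K)
    (hpointed : ∀ x ∈ K, -x ∈ K → x = 0)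
    (w : V) (hw : ∀ x, IsExtremeRayVec K x → 0 ≤ ⟪w, x⟫) :
    ∀ k ∈ K, 0 ≤ ⟪w, k⟫ := by
  obtain ⟨f, hf0, hfpos⟩ := exists_pos_functional K hclosed hsmul hadd hpointed
  -- f is positive on K \ {0}
  have hfposK : ∀ k ∈ K, k ≠ 0 → 0 < f k := by
    intro k hk hk0
    have hn : ‖k‖ ≠ 0 := norm_ne_zero_iff.2 hk0
    have hmem : ‖k‖⁻¹ • k ∈ K ∩ sphere (0:V) 1 := by
      refine ⟨hsmul k hk _ (inv_nonneg.2 (norm_nonneg k)), ?_⟩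
      simp [norm_smul, abs_of_nonneg (inv_nonneg.2 (norm_nonneg k)), inv_mul_cancel₀ hn]
    have := hfpos _ hmem
    rw [map_smul, smul_eq_mul] at this
    nlinarith [inv_pos.2 (norm_pos_iff.2 hk0), this]
  -- zero vanishing
  have hfzero : ∀ k ∈ K, f k = 0 → k = 0 := by
    intro k hk h
    by_contra h0
    exact absurd h (ne_of_gt (hfposK k hk h0))
  intro k hk
  rcases eq_or_ne k 0 with rfl | hk0
  · simp
  -- the base B
  set B : Set V := K ∩ {x | f x = 1} with hB
  have hBconv : Convex ℝ B := by
    intro a ha b hb p q hp hq hpq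
    refine ⟨hadd _ (hsmul a ha.1 p hp) _ (hsmul b hb.1 q hq), ?_⟩
    have ha2 : f a = 1 := ha.2
    have hb2 : f b = 1 := hb.2
    show f (p • a + q • b) = 1
    rw [map_add, map_smul, map_smul, smul_eq_mul, smul_eq_mul, ha2, hb2]
    linarith
  have hBclosed : IsClosed B := hclosed.inter (isClosed_eq f.continuous continuous_const)
  -- B is bounded: minimum of f on sphere part
  have hSne : (K ∩ sphere (0:V) 1).Nonempty := by
    refine ⟨‖k‖⁻¹ • k, hsmul k hk _ (inv_nonneg.2 (norm_nonneg k)), ?_⟩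
    simp [norm_smul, abs_of_nonneg (inv_nonneg.2 (norm_nonneg k)),
      inv_mul_cancel₀ (norm_ne_zero_iff.2 hk0)]
  have hScpt : IsCompact (K ∩ sphere (0:V) 1) := (isCompact_sphere (0:V) 1).of_isClosed_subset
    (hclosed.inter isClosed_sphere) Set.inter_subset_right
  obtain ⟨s₀, hs₀, hmin⟩ := hScpt.exists_isMinOn hSne f.continuous.continuousOn
  set m : ℝ := f s₀ with hm
  have hm0 : 0 < m := hfpos _ hs₀
  have hBsub : B ⊆ closedBall (0:V) m⁻¹ := by
    rintro x ⟨hxK, hx1⟩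
    have hx0 : x ≠ 0 := by
      intro h; rw [h] at hx1; simp at hx1
    have hmemS : ‖x‖⁻¹ • x ∈ K ∩ sphere (0:V) 1 := by
      refine ⟨hsmul x hxK _ (inv_nonneg.2 (norm_nonneg x)), ?_⟩
      simp [norm_smul, abs_of_nonneg (inv_nonneg.2 (norm_nonneg x)),
        inv_mul_cancel₀ (norm_ne_zero_iff.2 hx0)]
    have h2 : f s₀ ≤ f (‖x‖⁻¹ • x) := hmin hmemS
    rw [map_smul, smul_eq_mul] at h2
    have hx1' : f x = 1 := hx1
    rw [hx1', mul_one] at h2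
    have hxpos : 0 < ‖x‖ := norm_pos_iff.2 hx0
    have h3 : m * ‖x‖ ≤ 1 := by
      have h4 := mul_le_mul_of_nonneg_right h2 (le_of_lt hxpos)
      rwa [inv_mul_cancel₀ (ne_of_gt hxpos)] at h4
    rw [mem_closedBall, dist_zero_right]
    nlinarith [mul_inv_cancel₀ (ne_of_gt hm0), inv_pos.2 hm0]
  have hBcpt : IsCompact B :=
    (isCompact_closedBall (0:V) m⁻¹).of_isClosed_subset hBclosed hBsub
  have hKM := closure_convexHull_extremePoints hBcpt hBconv
  -- extreme points of B are extreme ray vectors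
  have hEP : ∀ p ∈ B.extremePoints ℝ, IsExtremeRayVec K p := by
    intro p hp
    obtain ⟨⟨hpK, hp1⟩, hpe⟩ := hp
    have hp1' : f p = 1 := hp1
    have hp0 : p ≠ 0 := by
      intro h; rw [h, map_zero] at hp1'; exact one_ne_zero hp1'.symm
    refine ⟨hpK, hp0, ?_⟩
    intro a ha b hb hab
    have hfab : f a + f b = 1 := by rw [← map_add, ← hab, hp1']
    rcases eq_or_ne a 0 with rfl | ha0
    · have hbp : b = p := by rw [hab, zero_add]
      exact ⟨⟨0, le_rfl, by simp⟩, ⟨1, zero_le_one, by rw [hbp, one_smul]⟩⟩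
    rcases eq_or_ne b 0 with rfl | hb0
    · have hap : a = p := by rw [hab, add_zero]
      exact ⟨⟨1, zero_le_one, by rw [hap, one_smul]⟩, ⟨0, le_rfl, by simp⟩⟩
    have hfa : 0 < f a := hfposK a ha ha0
    have hfb : 0 < f b := hfposK b hb hb0
    have hx₁ : (f a)⁻¹ • a ∈ B := ⟨hsmul a ha _ (inv_nonneg.2 hfa.le), by
      show f _ = 1; rw [map_smul, smul_eq_mul, inv_mul_cancel₀ (ne_of_gt hfa)]⟩
    have hx₂ : (f b)⁻¹ • b ∈ B := ⟨hsmul b hb _ (inv_nonneg.2 hfb.le), by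
      show f _ = 1; rw [map_smul, smul_eq_mul, inv_mul_cancel₀ (ne_of_gt hfb)]⟩
    have hseg : p ∈ openSegment ℝ ((f a)⁻¹ • a) ((f b)⁻¹ • b) := by
      refine ⟨f a, f b, hfa, hfb, hfab, ?_⟩
      rw [smul_smul, smul_smul, mul_inv_cancel₀ (ne_of_gt hfa),
        mul_inv_cancel₀ (ne_of_gt hfb), one_smul, one_smul, hab]
    have e1 := hpe hx₁ hx₂ hseg
    have e2 := hpe hx₂ hx₁ (by rw [openSegment_symm]; exact hseg)
    constructor
    · exact ⟨f a, hfa.le, by rw [← e1, smul_smul, mul_inv_cancel₀ (ne_of_gt hfa), one_smul]⟩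
    · exact ⟨f b, hfb.le, by rw [← e2, smul_smul, mul_inv_cancel₀ (ne_of_gt hfb), one_smul]⟩
  -- the halfspace determined by w
  set M : Set V := {v | 0 ≤ ⟪w, v⟫} with hMdef
  have hMclosed : IsClosed M := by
    have : M = (fun v => ⟪w, v⟫) ⁻¹' Set.Ici 0 := rfl
    rw [this]
    exact IsClosed.preimage (continuous_const.inner continuous_id) isClosed_Ici
  have hMconv : Convex ℝ M := by
    intro a ha b hb p q hp hq hpq
    have heq : ⟪w, p • a + q • b⟫ = p * ⟪w, a⟫ + q * ⟪w, b⟫ := by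
      rw [inner_add_right, real_inner_smul_right, real_inner_smul_right]
    show (0:ℝ) ≤ _
    rw [heq]
    exact add_nonneg (mul_nonneg hp ha) (mul_nonneg hq hb)
  have hsubM : B.extremePoints ℝ ⊆ M := fun p hp => hw p (hEP p hp)
  have hfk : 0 < f k := hfposK k hk hk0
  have hbB : (f k)⁻¹ • k ∈ B := ⟨hsmul k hk _ (inv_nonneg.2 hfk.le), by
    show f _ = 1; rw [map_smul, smul_eq_mul, inv_mul_cancel₀ (ne_of_gt hfk)]⟩
  have hbM : (f k)⁻¹ • k ∈ M := by
    rw [← hKM] at hbB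
    exact (IsClosed.closure_subset_iff hMclosed).2 (convexHull_min hsubM hMconv) hbB
  have hfin : (0:ℝ) ≤ ⟪w, (f k)⁻¹ • k⟫ := hbM
  rw [real_inner_smul_right] at hfin
  nlinarith [inv_pos.2 hfk]

theorem stmt_3 {V : Type*} [NormedAddCommGroup V] [InnerProductSpace ℝ V]
    [FiniteDimensional ℝ V]
    (K : Set V)
    (hclosed : IsClosed K)
    (hsmul : ∀ x ∈ K, ∀ c : ℝ, 0 ≤ c → c • x ∈ K)
    (hadd : ∀ a ∈ K, ∀ b ∈ K, a + b ∈ K)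
    (hpointed : ∀ x ∈ K, -x ∈ K → x = 0)
    (hgen : ∀ v : V, ∃ a ∈ K, ∃ b ∈ K, v = a - b)
    (hred : IsReducibleCone K) :
    IsReducibleCone {v : V | ∀ k ∈ K, 0 ≤ ⟪v, k⟫} := by
  obtain ⟨V₁, V₂, hcompl, h1, h2, hext⟩ := hred
  have hsup : V₂ ⊔ V₁ = ⊤ := by rw [sup_comm]; exact codisjoint_iff.mp hcompl.codisjoint
  have hinf : V₂ ⊓ V₁ = ⊥ := by rw [inf_comm]; exact disjoint_iff.mp hcompl.disjoint
  have hcodis : V₂ᗮ ⊔ V₁ᗮ = ⊤ := by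
    have h := Submodule.inf_orthogonal (V₂ᗮ) (V₁ᗮ)
    rw [Submodule.orthogonal_orthogonal, Submodule.orthogonal_orthogonal, hinf] at h
    exact Submodule.orthogonal_eq_bot_iff.mp h.symm
  refine ⟨V₂ᗮ, V₁ᗮ, ⟨?_, codisjoint_iff.mpr hcodis⟩, ?_, ?_, ?_⟩
  · rw [disjoint_iff, Submodule.inf_orthogonal, hsup, Submodule.top_orthogonal_eq_bot]
  · intro h
    have : V₂ = ⊤ := Submodule.orthogonal_eq_bot_iff.mp h
    rw [this] at hcompl
    exact h1 (disjoint_top.mp hcompl.disjoint)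
  · intro h
    have : V₁ = ⊤ := Submodule.orthogonal_eq_bot_iff.mp h
    rw [this] at hcompl
    exact h2 (top_disjoint.mp hcompl.disjoint)
  · rintro x ⟨hxK, hx0, hxext⟩
    have htop : x ∈ V₂ᗮ ⊔ V₁ᗮ := by rw [hcodis]; trivial
    obtain ⟨w₁, hw₁, w₂, hw₂, hsum⟩ := Submodule.mem_sup.mp htop
    have hz₁ : ∀ r ∈ V₂, ⟪w₁, r⟫ = 0 := fun r hr =>
      real_inner_comm w₁ r ▸ (Submodule.mem_orthogonal V₂ w₁).mp hw₁ r hr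
    have hz₂ : ∀ r ∈ V₁, ⟪w₂, r⟫ = 0 := fun r hr =>
      real_inner_comm w₂ r ▸ (Submodule.mem_orthogonal V₁ w₂).mp hw₂ r hr
    have hsplit : ∀ r : V, ⟪x, r⟫ = ⟪w₁, r⟫ + ⟪w₂, r⟫ := by
      intro r; rw [← hsum, inner_add_left]
    have hw₁K : ∀ k ∈ K, 0 ≤ ⟪w₁, k⟫ := by
      apply inner_nonneg_of_extreme K hclosed hsmul hadd hpointed
      intro r hr
      rcases hext r hr with h | h
      · have := hsplit r
        rw [hz₂ r h] at this
        have hxr : 0 ≤ ⟪x, r⟫ := hxK r hr.1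
        linarith
      · rw [hz₁ r h]
    have hw₂K : ∀ k ∈ K, 0 ≤ ⟪w₂, k⟫ := by
      apply inner_nonneg_of_extreme K hclosed hsmul hadd hpointed
      intro r hr
      rcases hext r hr with h | h
      · rw [hz₂ r h]
      · have := hsplit r
        rw [hz₁ r h] at this
        have hxr : 0 ≤ ⟪x, r⟫ := hxK r hr.1
        linarith
    obtain ⟨⟨c, hc, hceq⟩, ⟨d, hd, hdeq⟩⟩ := hxext w₁ hw₁K w₂ hw₂K hsum.symm
    rcases eq_or_ne c 0 with rfl | hc0
    · right
      have hw10 : w₁ = 0 := by rw [hceq, zero_smul]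
      rw [← hsum, hw10, zero_add]
      exact hw₂
    · left
      have hxeq : x = c⁻¹ • w₁ := by rw [hceq, smul_smul, inv_mul_cancel₀ hc0, one_smul]
      rw [hxeq]
      exact Submodule.smul_mem _ _ hw₁
end

section
/- Let {e_i}_{i∈I} be a finite family of vectors in ℝ^d satisfying ∑_{i∈I} e_i e_iᵀ = c·I_d for some c > 0, and let T : ℝ^d → ℝ^d be an invertible linear map whose adjoint T† permutes the family {e_i} (i.e., there is a permutation σ of I with T†(e_i) = e_{σ(i)} for all i). Then T is orthogonal: TᵀT = I_d. -/
/-! Conjugating the frame operator `S = ∑ eᵢ eᵢᵀ` by `T` gives `Tᵀ S T = ∑ (Tᵀ eᵢ)(Tᵀ eᵢ)ᵀ`, which is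
`S` again because `Tᵀ` only permutes the `eᵢ`. With `S = c • 1` and `c ≠ 0` this is `Tᵀ T = 1`. -/

open Matrix

theorem Matrix.transpose_mul_vecMulVec_mul {m n R : Type*} [Fintype m] [CommSemiring R]
    (A : Matrix m n R) (u : m → R) :
    Aᵀ * vecMulVec u u * A = vecMulVec (Aᵀ *ᵥ u) (Aᵀ *ᵥ u) := by
  rw [mul_vecMulVec, vecMulVec_mul, ← mulVec_transpose]

theorem Matrix.transpose_mul_sum_vecMulVec_mul_of_perm {m ι R : Type*} [Fintype m] [Fintype ι]
    [CommSemiring R] (A : Matrix m m R) (e : ι → m → R) (σ : Equiv.Perm ι)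
    (hA : ∀ i, Aᵀ *ᵥ e i = e (σ i)) :
    Aᵀ * (∑ i, vecMulVec (e i) (e i)) * A = ∑ i, vecMulVec (e i) (e i) := by
  simp_rw [Finset.mul_sum, Finset.sum_mul, transpose_mul_vecMulVec_mul, hA]
  exact Equiv.sum_comp σ fun i => vecMulVec (e i) (e i)

theorem stmt_11_general {d : ℕ} {I : Type*} [Fintype I]
    (e : I → (Fin d → ℝ)) (c : ℝ) (hc : 0 < c)
    (hsum : ∑ i, Matrix.vecMulVec (e i) (e i) = c • (1 : Matrix (Fin d) (Fin d) ℝ))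
    (T : Matrix (Fin d) (Fin d) ℝ)
    (σ : Equiv.Perm I) (hperm : ∀ i, Tᵀ *ᵥ e i = e (σ i)) :
    Tᵀ * T = 1 := by
  have hframe := transpose_mul_sum_vecMulVec_mul_of_perm T e σ hperm
  rw [hsum, Matrix.mul_smul, Matrix.smul_mul, Matrix.mul_one] at hframe
  exact smul_right_injective _ hc.ne' hframe

theorem stmt_11 {d : ℕ} {I : Type*} [Fintype I]
    (e : I → (Fin d → ℝ)) (c : ℝ) (hc : 0 < c)
    (hsum : ∑ i, Matrix.vecMulVec (e i) (e i) = c • (1 : Matrix (Fin d) (Fin d) ℝ))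
    (T : Matrix (Fin d) (Fin d) ℝ) (hT : IsUnit T)
    (σ : Equiv.Perm I) (hperm : ∀ i, Tᵀ *ᵥ e i = e (σ i)) :
    Tᵀ * T = 1 :=
  stmt_11_general e c hc hsum T σ hperm
end
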